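/- Let d > 0, s > 0, and let g : [0,s] → (0,∞) be a continuous function such that for every closed subinterval J ⊆ [0,s] and every Lebesgue-measurable subset ω ⊆ J with |ω| > 0, sup_J g ≤ (4|J|/|ω|)^d · sup_ω g. Let m, n, p, q > 0 be reals with m·n = p·q and p·d < 1. Then (∫_0^s g(x)^m e^{−x} dx)^n · (∫_0^s g(x)^{−p} e^{−x} dx)^q ≤ (2e)^{n+q} · 4^{(mn+pq)d} · Γ(m d + 1)^n / (1 − p d)^q · (1 − e^{−s})^{n+q}, where Γ(x) := ∫_0^∞ t^{x−1} e^{−t} dt. -/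

import Mathlib

/-!
Write `M(y) = sup_{[0,y]} g` and `M₀ = M(min s 1)`. The Remez condition with `ω = [0, w]` gives
the growth bound `g x ≤ (4(1+x))^d M₀`; as `(1+x)^{md}` is increasing, its `e^{-x}`-average over
`[0,s]` is at most its average over `[0,∞)`, so `∫ g^m e^{-x} ≤ e 4^{md} Γ(md+1) (1 - e^{-s}) M₀^m`.
With `ω` a sublevel set the Remez condition gives `|{g ≤ λ} ∩ [0,y]| ≤ 4y (λ / M(y))^{1/d}`; since
`pd < 1` the layer-cake formula turns this into `∫_0^y g^{-p} ≤ 4^{pd} y M(y)^{-p} / (1 - pd)`,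
and integrating by parts against `e^{-x}` gives
`∫ g^{-p} e^{-x} ≤ 2 · 4^{pd} (1 - e^{-s}) M₀^{-p} / (1 - pd)`.
The powers of `M₀` cancel in the product because `mn = pq`.
-/

open MeasureTheory Set Real

-- The `e^{-x}`-average of `h` over `[c, b]` is at most `h b`, which is at most its average
-- over `(b, ∞)`.
theorem intervalIntegral_mul_exp_neg_le_of_monotoneOn {h : ℝ → ℝ} {c b : ℝ} (hcb : c ≤ b)
    (hmono : MonotoneOn h (Ici c)) (hint : IntegrableOn (fun x => h x * exp (-x)) (Ioi c)) :
    ∫ x in c..b, h x * exp (-x) ≤ (1 - exp (c - b)) * ∫ x in Ioi c, h x * exp (-x) := by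
  have hsplit : ∫ x in Ioi c, h x * exp (-x) =
      (∫ x in c..b, h x * exp (-x)) + ∫ x in Ioi b, h x * exp (-x) := by
    rw [intervalIntegral.integral_of_le hcb, ← setIntegral_union (Ioc_disjoint_Ioi le_rfl)
      measurableSet_Ioi (hint.mono_set Ioc_subset_Ioi_self) (hint.mono_set (Ioi_subset_Ioi hcb)),
      Ioc_union_Ioi_eq_Ioi hcb]
  have hlow : ∫ x in c..b, h x * exp (-x) ≤ h b * (exp (-c) - exp (-b)) := by
    have hexp : ∫ x in c..b, h b * exp (-x) = h b * (exp (-c) - exp (-b)) := by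
      rw [intervalIntegral.integral_const_mul, intervalIntegral.integral_comp_neg
        (fun x => exp x), integral_exp]
    rw [← hexp]
    refine intervalIntegral.integral_mono_on hcb
      ((intervalIntegrable_iff_integrableOn_Ioc_of_le hcb).2 (hint.mono_set Ioc_subset_Ioi_self))
      (by apply Continuous.intervalIntegrable; fun_prop)
      fun x hx => ?_
    gcongr
    exact hmono hx.1 (mem_Ici.2 hcb) hx.2
  have hhigh : h b * exp (-b) ≤ ∫ x in Ioi b, h x * exp (-x) := by
    rw [← integral_exp_neg_Ioi, ← integral_const_mul]
    refine setIntegral_mono_on ((integrableOn_exp_neg_Ioi b).const_mul _)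
      (hint.mono_set (Ioi_subset_Ioi hcb)) measurableSet_Ioi fun x hx => ?_
    gcongr
    exact hmono (mem_Ici.2 hcb) (mem_Ici.2 (hcb.trans hx.le)) hx.le
  have hb := exp_pos (-b)
  have hbc : exp (-b) ≤ exp (-c) := exp_le_exp.2 (neg_le_neg hcb)
  have hweight : 1 - exp (c - b) = (exp (-c) - exp (-b)) / exp (-c) := by
    rw [sub_div, div_self (exp_pos _).ne', ← exp_sub, neg_sub_neg]
  rw [hsplit, hweight, div_mul_eq_mul_div, le_div_iff₀ (exp_pos _)]
  linarith [mul_le_mul_of_nonneg_right hlow hb.le,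
    mul_le_mul_of_nonneg_left hhigh (sub_nonneg.2 hbc)]

theorem intervalIntegral_one_add_rpow_mul_exp_neg_le {a s : ℝ} (ha : 0 ≤ a) (hs : 0 ≤ s) :
    ∫ x in 0..s, (1 + x) ^ a * exp (-x) ≤ exp 1 * (1 - exp (-s)) * Gamma (a + 1) := by
  have hshift :
      ∫ x in 0..s, (1 + x) ^ a * exp (-x) = exp 1 * ∫ u in 1..s + 1, u ^ a * exp (-u) := by
    have := intervalIntegral.integral_comp_add_right (fun u => exp 1 * (u ^ a * exp (-u)))
      (a := 0) (b := s) 1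
    rw [zero_add] at this
    rw [← intervalIntegral.integral_const_mul, ← this]
    refine intervalIntegral.integral_congr fun x _ => ?_
    simp only [add_comm x 1, neg_add, exp_add, exp_neg]
    field_simp
  have hGamma : IntegrableOn (fun u => u ^ a * exp (-u)) (Ioi 0) := by
    simpa [mul_comm] using GammaIntegral_convergent (s := a + 1) (by linarith)
  have htail : ∫ u in Ioi 1, u ^ a * exp (-u) ≤ Gamma (a + 1) := by
    rw [Gamma_eq_integral (by linarith), add_sub_cancel_right]
    simp_rw [mul_comm (exp _)]
    refine setIntegral_mono_set hGamma ?_ (Ioi_subset_Ioi zero_le_one).eventuallyLE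
    filter_upwards [ae_restrict_mem measurableSet_Ioi] with u hu
    have := rpow_nonneg (le_of_lt hu) a
    positivity
  have hcheb := intervalIntegral_mul_exp_neg_le_of_monotoneOn (by linarith : (1:ℝ) ≤ s + 1)
    (fun u hu v _ huv => rpow_le_rpow (zero_le_one.trans hu) huv ha)
    (hGamma.mono_set (Ioi_subset_Ioi zero_le_one))
  rw [show (1:ℝ) - (s + 1) = -s by ring] at hcheb
  have hE : 0 ≤ 1 - exp (-s) := sub_nonneg.2 (exp_le_one_iff.2 (by linarith))
  rw [hshift, mul_assoc]
  gcongr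
  exact hcheb.trans (by gcongr)

theorem intervalIntegral_mul_exp_neg_le_of_primitive_le {F : ℝ → ℝ} {a s K : ℝ} (ha : 0 < a)
    (has : a ≤ s) (hF : ContinuousOn F (Icc 0 s)) (hF0 : ∀ x ∈ Icc 0 s, 0 ≤ F x)
    (hK : ∀ y ∈ Icc a s, ∫ x in 0..y, F x ≤ K * y) :
    ∫ x in 0..s, F x * exp (-x) ≤ (1 + a) * K * (1 - exp (-s)) := by
  set G : ℝ → ℝ := fun y => ∫ x in 0..y, F x
  have hs : 0 ≤ s := ha.le.trans has
  have hI : uIcc 0 s = Icc 0 s := uIcc_of_le hs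
  have hFint : IntervalIntegrable F volume 0 s := (hF.mono (by rw [hI])).intervalIntegrable
  have hG_mono : ∀ x y, 0 ≤ x → x ≤ y → y ≤ s → G x ≤ G y := fun x y hx hxy hy =>
    intervalIntegral.integral_mono_interval le_rfl hx hxy
      (by filter_upwards [ae_restrict_mem measurableSet_Ioc] with t ht
          exact hF0 t ⟨ht.1.le, ht.2.trans hy⟩)
      (hFint.mono_set (by rw [hI, uIcc_of_le (hx.trans hxy)]; exact Icc_subset_Icc le_rfl hy))
  have hG_le : ∀ x ∈ Icc 0 s, G x ≤ K * (x + a) := by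
    have hKa : 0 ≤ K * a := (intervalIntegral.integral_nonneg ha.le fun t ht =>
      hF0 t ⟨ht.1, ht.2.trans has⟩).trans (hK a ⟨le_rfl, has⟩)
    have hK0 : 0 ≤ K := nonneg_of_mul_nonneg_left hKa ha
    intro x hx
    rcases le_total x a with hxa | hax
    · linarith [hG_mono x a hx.1 hxa has, hK a ⟨le_rfl, has⟩, mul_nonneg hK0 hx.1]
    · linarith [hK x ⟨hax, hx.2⟩]
  have hderiv : ∀ x ∈ uIcc 0 s, HasDerivWithinAt G (F x) (uIcc 0 s) x := by
    intro x hx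
    rw [hI] at hx ⊢
    have : Fact (x ∈ Icc 0 s) := ⟨hx⟩
    exact intervalIntegral.integral_hasDerivWithinAt_right
      (hFint.mono_set (by rw [hI, uIcc_of_le hx.1]; exact Icc_subset_Icc le_rfl hx.2))
      (hF.stronglyMeasurableAtFilter_nhdsWithin measurableSet_Icc x) (hF x hx)
  have hparts : ∫ x in 0..s, F x * exp (-x) = exp (-s) * G s + ∫ x in 0..s, exp (-x) * G x := by
    have := intervalIntegral.integral_mul_deriv_eq_deriv_mul_of_hasDerivWithinAt
      (u := fun x => exp (-x)) (u' := fun x => -exp (-x))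
      (fun x _ => ((hasDerivAt_neg x).exp.congr_deriv (by simp)).hasDerivWithinAt) hderiv
      (by apply Continuous.intervalIntegrable; fun_prop) hFint
    simp only [G, intervalIntegral.integral_same, mul_zero, sub_zero, neg_mul,
      intervalIntegral.integral_neg, sub_neg_eq_add] at this
    simp_rw [mul_comm (F _)]
    exact this
  have hmoment : ∫ x in 0..s, exp (-x) * (K * (x + a)) =
      K * ((1 + a) - (1 + a + s) * exp (-s)) := by
    rw [intervalIntegral.integral_eq_sub_of_hasDerivAt
      (f := fun x => -K * (x + a + 1) * exp (-x)) (fun x _ => ?_)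
      (by apply Continuous.intervalIntegrable; fun_prop)]
    · simp only [neg_zero, exp_zero, zero_add]; ring
    · exact ((((hasDerivAt_id' x).add_const a).add_const 1).const_mul (-K)).mul
        (hasDerivAt_neg x).exp |>.congr_deriv (by ring)
  have hGcont : ContinuousOn G (Icc 0 s) := by
    rw [← hI]
    exact intervalIntegral.continuousOn_primitive_interval (by rw [hI]; exact hF.integrableOn_Icc)
  have hbound : ∫ x in 0..s, exp (-x) * G x ≤ ∫ x in 0..s, exp (-x) * (K * (x + a)) :=
    intervalIntegral.integral_mono_on hs
      (((continuous_neg.rexp).continuousOn.mul hGcont).intervalIntegrable_of_Icc hs)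
      (by apply Continuous.intervalIntegrable; fun_prop)
      fun x hx => mul_le_mul_of_nonneg_left (hG_le x hx) (exp_pos _).le
  have hGs := hK s ⟨has, le_rfl⟩
  rw [hparts]
  linarith [mul_le_mul_of_nonneg_left hGs (exp_pos (-s)).le]

theorem setIntegral_Ioi_le_of_le_of_le_rpow {φ : ℝ → ℝ} {y c T r : ℝ} (hT : 0 < T) (hr : 1 < r)
    (hφ : AEStronglyMeasurable φ (volume.restrict (Ioi 0))) (h0 : ∀ t ∈ Ioi 0, 0 ≤ φ t)
    (hy : ∀ t ∈ Ioc 0 T, φ t ≤ y) (hc : ∀ t ∈ Ioi T, φ t ≤ c * t ^ (-r)) :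
    ∫ t in Ioi 0, φ t ≤ y * T + c * (T ^ (1 - r) / (r - 1)) := by
  have hr' : -r < -1 := by linarith
  have hint_tail : IntegrableOn (fun t => c * t ^ (-r)) (Ioi T) :=
    (integrableOn_Ioi_rpow_of_lt hr' hT).const_mul c
  have hφ_head : IntegrableOn φ (Ioc 0 T) :=
    Integrable.mono' (integrableOn_const measure_Ioc_lt_top.ne)
      (hφ.mono_measure (Measure.restrict_mono Ioc_subset_Ioi_self le_rfl))
      (by filter_upwards [ae_restrict_mem measurableSet_Ioc] with t ht
          rw [norm_of_nonneg (h0 t ht.1)]; exact hy t ht)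
  have hφ_tail : IntegrableOn φ (Ioi T) :=
    Integrable.mono' hint_tail
      (hφ.mono_measure (Measure.restrict_mono (Ioi_subset_Ioi hT.le) le_rfl))
      (by filter_upwards [ae_restrict_mem measurableSet_Ioi] with t ht
          rw [norm_of_nonneg (h0 t (hT.trans ht))]; exact hc t ht)
  rw [← Ioc_union_Ioi_eq_Ioi hT.le,
    setIntegral_union (Ioc_disjoint_Ioi le_rfl) measurableSet_Ioi hφ_head hφ_tail]
  gcongr
  · calc ∫ t in Ioc 0 T, φ t ≤ ∫ _ in Ioc 0 T, y :=
          setIntegral_mono_on hφ_head (integrableOn_const measure_Ioc_lt_top.ne)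
            measurableSet_Ioc hy
      _ = y * T := by simp [hT.le, mul_comm]
  · calc ∫ t in Ioi T, φ t ≤ ∫ t in Ioi T, c * t ^ (-r) :=
          setIntegral_mono_on hφ_tail hint_tail measurableSet_Ioi hc
      _ = c * (T ^ (1 - r) / (r - 1)) := by
          rw [integral_const_mul, integral_Ioi_rpow_of_lt hr' hT, neg_add_eq_sub,
            ← neg_sub r 1, div_neg, neg_div, neg_neg]

theorem integral_rpow_neg_le_of_measure_sublevel_le {α : Type*} [MeasurableSpace α]
    {μ : Measure α} {f : α → ℝ} {p d y L : ℝ} (hp : 0 < p) (hd : 0 < d) (hpd : p * d < 1)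
    (hy : 0 ≤ y) (hL : 0 < L) (hf : ∀ᵐ x ∂μ, 0 < f x)
    (hint : Integrable (fun x => f x ^ (-p)) μ) (hμ : μ univ ≤ ENNReal.ofReal y)
    (hsub : ∀ l, 0 < l → μ {x | f x ≤ l} ≤ ENNReal.ofReal (y * (l / L) ^ d⁻¹)) :
    ∫ x, f x ^ (-p) ∂μ ≤ y * L ^ (-p) / (1 - p * d) := by
  have : IsFiniteMeasure μ := ⟨hμ.trans_lt ENNReal.ofReal_lt_top⟩
  set r := (p * d)⁻¹ with hr_def
  have hpd0 : 0 < p * d := mul_pos hp hd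
  have hr : 1 < r := by rw [hr_def, lt_inv_comm₀ one_pos hpd0, inv_one]; exact hpd
  set φ : ℝ → ℝ := fun t => μ.real {x | t < f x ^ (-p)}
  have hφ_anti : Antitone φ := fun t₁ t₂ h => measureReal_mono fun x hx => h.trans_lt hx
  have hφ_y : ∀ t, φ t ≤ y := fun t =>
    ENNReal.toReal_le_of_le_ofReal hy ((measure_mono (subset_univ _)).trans hμ)
  have hφ_tail : ∀ t ∈ Ioi (0 : ℝ), φ t ≤ y * L ^ (-d⁻¹) * t ^ (-r) := by
    intro t ht
    have hsubset : {x | t < f x ^ (-p)} ≤ᵐ[μ] {x | f x ≤ t ^ (-p⁻¹)} := by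
      filter_upwards [hf] with x hx htx
      have := rpow_lt_rpow_of_neg (z := -p⁻¹) ht htx (by simpa using hp)
      rw [← rpow_mul hx.le, neg_mul_neg, mul_inv_cancel₀ hp.ne', rpow_one] at this
      exact this.le
    have hval : y * (t ^ (-p⁻¹) / L) ^ d⁻¹ = y * L ^ (-d⁻¹) * t ^ (-r) := by
      rw [div_rpow (rpow_nonneg (le_of_lt ht) _) hL.le, ← rpow_mul (le_of_lt ht), rpow_neg hL.le,
        hr_def, mul_inv, neg_mul]
      ring
    rw [← hval]
    refine ENNReal.toReal_le_of_le_ofReal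
      (mul_nonneg hy (rpow_nonneg (div_nonneg (rpow_nonneg (le_of_lt ht) _) hL.le) _)) ?_
    exact (measure_mono_ae hsubset).trans (hsub _ (rpow_pos_of_pos ht _))
  -- `L ^ (-p)` is where the two bounds `y` and `y L^{-1/d} t^{-r}` on `φ t` cross.
  have hbound := setIntegral_Ioi_le_of_le_of_le_rpow (T := L ^ (-p)) (rpow_pos_of_pos hL _) hr
    hφ_anti.measurable.aestronglyMeasurable (fun t _ => measureReal_nonneg)
    (fun t _ => hφ_y t) (fun t ht => hφ_tail t (mem_Ioi.2 ((rpow_pos_of_pos hL _).trans ht)))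
  rw [hint.integral_eq_integral_meas_lt (hf.mono fun x hx => (rpow_pos_of_pos hx _).le)]
  refine hbound.trans_eq ?_
  have hcT : L ^ (-d⁻¹) * (L ^ (-p)) ^ (1 - r) = L ^ (-p) := by
    rw [← rpow_mul hL.le, ← rpow_add hL]
    congr 1
    rw [hr_def]
    field_simp
    ring
  have h1pd : (1 - p * d) ≠ 0 := by linarith
  calc y * L ^ (-p) + y * L ^ (-d⁻¹) * ((L ^ (-p)) ^ (1 - r) / (r - 1))
      = y * L ^ (-p) * (1 + 1 / (r - 1)) := by rw [mul_div_assoc', mul_assoc y, hcT]; ring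
    _ = y * L ^ (-p) / (1 - p * d) := by
      rw [hr_def]
      field_simp
      ring

theorem rpow_mul_rpow_le_of_le_mul_rpow {A B α β M m n p q : ℝ} (hA : 0 ≤ A) (hB : 0 ≤ B)
    (hM : 0 < M) (hn : 0 ≤ n) (hq : 0 ≤ q) (hmn : m * n = p * q) (hAα : A ≤ α * M ^ m)
    (hBβ : B ≤ β * M ^ (-p)) : A ^ n * B ^ q ≤ α ^ n * β ^ q := by
  have hα : 0 ≤ α := nonneg_of_mul_nonneg_left (hA.trans hAα) (rpow_pos_of_pos hM _)
  have hβ : 0 ≤ β := nonneg_of_mul_nonneg_left (hB.trans hBβ) (rpow_pos_of_pos hM _)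
  calc A ^ n * B ^ q ≤ (α * M ^ m) ^ n * (β * M ^ (-p)) ^ q := by gcongr
    _ = α ^ n * β ^ q * M ^ (m * n - p * q) := by
        rw [mul_rpow hα (by positivity), mul_rpow hβ (by positivity), ← rpow_mul hM.le,
          ← rpow_mul hM.le, sub_eq_add_neg, rpow_add hM, neg_mul]
        ring
    _ = α ^ n * β ^ q := by rw [hmn, sub_self, rpow_zero, mul_one]

theorem le_biSup_of_continuousOn {X : Type*} [TopologicalSpace X] {K : Set X} {g : X → ℝ}
    (hK : IsCompact K) (hg : ContinuousOn g K) {x : X} (hx : x ∈ K) : g x ≤ ⨆ t ∈ K, g t := by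
  refine le_ciSup₂ (f := fun t (_ : t ∈ K) => g t)
    ((hK.image_of_continuousOn hg).bddAbove.mono ?_) x hx
  simp only [iUnion_subset_iff, range_subset_iff]
  exact fun t ht => mem_image_of_mem g ht

def RemezCondition (g : ℝ → ℝ) (d s : ℝ) : Prop :=
  ∀ u v : ℝ, 0 ≤ u → u ≤ v → v ≤ s →
    ∀ ω : Set ℝ, ω ⊆ Icc u v → MeasurableSet ω → 0 < volume ω →
      (⨆ x ∈ Icc u v, g x) ≤ (4 * (v - u) / (volume ω).toReal) ^ d * ⨆ x ∈ ω, g x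

section

variable {g : ℝ → ℝ} {d s : ℝ}

theorem iSup_Icc_pos (hg : ContinuousOn g (Icc 0 s)) (hgpos : ∀ x ∈ Icc 0 s, 0 < g x) {y : ℝ}
    (hy : 0 ≤ y) (hys : y ≤ s) : 0 < ⨆ x ∈ Icc 0 y, g x :=
  (hgpos 0 ⟨le_rfl, hy.trans hys⟩).trans_le <|
    le_biSup_of_continuousOn isCompact_Icc (hg.mono (Icc_subset_Icc le_rfl hys)) ⟨le_rfl, hy⟩

theorem RemezCondition.iSup_Icc_le (h : RemezCondition g d s) {w x : ℝ} (hw : 0 < w)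
    (hwx : w ≤ x) (hxs : x ≤ s) :
    ⨆ t ∈ Icc 0 x, g t ≤ (4 * x / w) ^ d * ⨆ t ∈ Icc 0 w, g t := by
  simpa [hw.le] using h 0 x le_rfl (hw.le.trans hwx) hxs (Icc 0 w) (Icc_subset_Icc le_rfl hwx)
    measurableSet_Icc (by simpa using hw)

theorem RemezCondition.volume_sublevel_le (h : RemezCondition g d s)
    (hg : ContinuousOn g (Icc 0 s)) (hgpos : ∀ x ∈ Icc 0 s, 0 < g x) (hd : 0 < d) {y l : ℝ}
    (hy : 0 < y) (hys : y ≤ s) (hl : 0 < l) :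
    volume ({x | g x ≤ l} ∩ Icc 0 y) ≤
      ENNReal.ofReal (4 * y * (l / ⨆ x ∈ Icc 0 y, g x) ^ d⁻¹) := by
  set ω := {x | g x ≤ l} ∩ Icc 0 y
  set M := ⨆ x ∈ Icc 0 y, g x
  have hM : 0 < M := iSup_Icc_pos hg hgpos hy.le hys
  rcases (zero_le : 0 ≤ volume ω).eq_or_lt with h0 | hpos
  · rw [← h0]; exact zero_le
  have hω_closed : IsClosed ω := by
    rw [show ω = Icc 0 y ∩ g ⁻¹' Iic l from inter_comm _ _]
    exact (hg.mono (Icc_subset_Icc le_rfl hys)).preimage_isClosed_of_isClosed isClosed_Icc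
      isClosed_Iic
  have hω_fin : volume ω ≠ ⊤ :=
    ((measure_mono inter_subset_right).trans_lt measure_Icc_lt_top).ne
  have ha : 0 < (volume ω).toReal := ENNReal.toReal_pos hpos.ne' hω_fin
  have hrem := h 0 y le_rfl hy.le hys ω inter_subset_right hω_closed.measurableSet hpos
  rw [sub_zero] at hrem
  have hsup : ⨆ x ∈ ω, g x ≤ l := Real.iSup_le (fun x => Real.iSup_le (fun hx => hx.1) hl.le) hl.le
  have hMl : M / l ≤ (4 * y / (volume ω).toReal) ^ d := by
    rw [div_le_iff₀ hl]
    exact hrem.trans (mul_le_mul_of_nonneg_left hsup (by positivity))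
  have hroot : (M / l) ^ d⁻¹ ≤ 4 * y / (volume ω).toReal :=
    (rpow_inv_le_iff_of_pos (by positivity) (by positivity) hd).2 hMl
  rw [← ENNReal.ofReal_toReal hω_fin]
  refine ENNReal.ofReal_le_ofReal ?_
  rw [← inv_div M l, inv_rpow (by positivity), ← div_eq_mul_inv,
    le_div_iff₀ (by positivity), mul_comm]
  exact (le_div_iff₀ ha).1 hroot

theorem RemezCondition.le_rpow_mul_iSup (h : RemezCondition g d s)
    (hg : ContinuousOn g (Icc 0 s)) (hgpos : ∀ x ∈ Icc 0 s, 0 < g x) (hd : 0 ≤ d) {x : ℝ}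
    (hx : x ∈ Icc 0 s) : g x ≤ (4 * (1 + x)) ^ d * ⨆ t ∈ Icc 0 (min s 1), g t := by
  have hx0 := hx.1
  rcases le_or_gt x (min s 1) with hxa | hax
  · have hM := iSup_Icc_pos hg hgpos (le_min (hx0.trans hx.2) zero_le_one) (min_le_left s 1)
    calc g x ≤ ⨆ t ∈ Icc 0 (min s 1), g t :=
          le_biSup_of_continuousOn isCompact_Icc (hg.mono (Icc_subset_Icc le_rfl (min_le_left s 1)))
            ⟨hx0, hxa⟩
      _ ≤ (4 * (1 + x)) ^ d * ⨆ t ∈ Icc 0 (min s 1), g t :=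
          le_mul_of_one_le_left hM.le (one_le_rpow (by linarith) hd)
  · have h1s : min s 1 = 1 := min_eq_right (by
      by_contra! hs1
      rw [min_eq_left hs1.le] at hax
      linarith [hx.2])
    rw [h1s] at hax ⊢
    have hM := iSup_Icc_pos hg hgpos zero_le_one (by linarith [hx.2])
    calc g x ≤ ⨆ t ∈ Icc 0 x, g t :=
          le_biSup_of_continuousOn isCompact_Icc (hg.mono (Icc_subset_Icc le_rfl hx.2))
            ⟨hx0, le_rfl⟩
      _ ≤ (4 * x / 1) ^ d * ⨆ t ∈ Icc 0 1, g t := h.iSup_Icc_le one_pos hax.le hx.2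
      _ ≤ (4 * (1 + x)) ^ d * ⨆ t ∈ Icc 0 1, g t := by
          rw [div_one]; gcongr; linarith

theorem RemezCondition.intervalIntegral_rpow_mul_exp_neg_le (h : RemezCondition g d s)
    (hg : ContinuousOn g (Icc 0 s)) (hgpos : ∀ x ∈ Icc 0 s, 0 < g x) (hs : 0 ≤ s) {m : ℝ}
    (hm : 0 ≤ m) (hd : 0 ≤ d) :
    ∫ x in 0..s, g x ^ m * exp (-x) ≤
      exp 1 * 4 ^ (m * d) * Gamma (m * d + 1) * (1 - exp (-s)) *
        (⨆ x ∈ Icc 0 (min s 1), g x) ^ m := by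
  set M := ⨆ x ∈ Icc 0 (min s 1), g x
  have hM : 0 < M := iSup_Icc_pos hg hgpos (le_min hs zero_le_one) (min_le_left s 1)
  have hmd : 0 ≤ m * d := mul_nonneg hm hd
  have hpt : ∀ x ∈ Icc 0 s,
      g x ^ m * exp (-x) ≤ 4 ^ (m * d) * M ^ m * ((1 + x) ^ (m * d) * exp (-x)) := by
    intro x hx
    have h1x : 0 ≤ 1 + x := by linarith [hx.1]
    calc g x ^ m * exp (-x) ≤ ((4 * (1 + x)) ^ d * M) ^ m * exp (-x) := by
          gcongr
          · exact (hgpos x hx).le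
          · exact h.le_rpow_mul_iSup hg hgpos hd hx
      _ = 4 ^ (m * d) * M ^ m * ((1 + x) ^ (m * d) * exp (-x)) := by
          rw [mul_rpow (by positivity) hM.le, ← rpow_mul (by positivity),
            mul_rpow (by norm_num) h1x, mul_comm d m]
          ring
  calc ∫ x in 0..s, g x ^ m * exp (-x)
      ≤ ∫ x in 0..s, 4 ^ (m * d) * M ^ m * ((1 + x) ^ (m * d) * exp (-x)) :=
        intervalIntegral.integral_mono_on hs
          (((hg.rpow_const fun x hx => Or.inl (hgpos x hx).ne').mul
            (continuous_neg.rexp.continuousOn)).intervalIntegrable_of_Icc hs)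
          ((continuous_const.mul (((continuous_const.add continuous_id).rpow_const
            fun _ => Or.inr hmd).mul continuous_neg.rexp)).intervalIntegrable 0 s)
          hpt
    _ = 4 ^ (m * d) * M ^ m * ∫ x in 0..s, (1 + x) ^ (m * d) * exp (-x) :=
        intervalIntegral.integral_const_mul _ _
    _ ≤ 4 ^ (m * d) * M ^ m * (exp 1 * (1 - exp (-s)) * Gamma (m * d + 1)) := by
        gcongr
        exact intervalIntegral_one_add_rpow_mul_exp_neg_le hmd hs
    _ = _ := by ring

theorem RemezCondition.intervalIntegral_rpow_neg_le (h : RemezCondition g d s)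
    (hg : ContinuousOn g (Icc 0 s)) (hgpos : ∀ x ∈ Icc 0 s, 0 < g x) {p : ℝ} (hp : 0 < p)
    (hd : 0 < d) (hpd : p * d < 1) {y : ℝ} (hy : 0 < y) (hys : y ≤ s) :
    ∫ x in 0..y, g x ^ (-p) ≤ 4 ^ (p * d) / (1 - p * d) * y * (⨆ x ∈ Icc 0 y, g x) ^ (-p) := by
  set M := ⨆ x ∈ Icc 0 y, g x
  have hM : 0 < M := iSup_Icc_pos hg hgpos hy.le hys
  have h4 : (0 : ℝ) < 4 ^ d := by positivity
  have hgy : ContinuousOn g (Icc 0 y) := hg.mono (Icc_subset_Icc le_rfl hys)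
  have hlayer := integral_rpow_neg_le_of_measure_sublevel_le (μ := volume.restrict (Icc 0 y))
    (f := g) (y := y) (L := M / 4 ^ d) hp hd hpd hy.le (div_pos hM h4)
    (by filter_upwards [ae_restrict_mem measurableSet_Icc] with x hx
        exact hgpos x ⟨hx.1, hx.2.trans hys⟩)
    ((hgy.rpow_const fun x hx => Or.inl (hgpos x ⟨hx.1, hx.2.trans hys⟩).ne').integrableOn_Icc)
    (by simp)
    (fun l hl => by
      rw [Measure.restrict_apply' measurableSet_Icc,
        show l / (M / 4 ^ d) = 4 ^ d * (l / M) by field_simp, mul_rpow h4.le (by positivity),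
        rpow_rpow_inv (by norm_num) hd.ne', ← mul_assoc, mul_comm y]
      exact h.volume_sublevel_le hg hgpos hd hy hys hl)
  rw [intervalIntegral.integral_of_le hy.le, ← integral_Icc_eq_integral_Ioc]
  refine hlayer.trans_eq ?_
  rw [div_rpow hM.le h4.le, rpow_neg h4.le, ← rpow_mul (by norm_num), div_inv_eq_mul,
    mul_comm d p]
  ring

theorem RemezCondition.intervalIntegral_rpow_neg_mul_exp_neg_le (h : RemezCondition g d s)
    (hg : ContinuousOn g (Icc 0 s)) (hgpos : ∀ x ∈ Icc 0 s, 0 < g x) (hs : 0 < s) {p : ℝ}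
    (hp : 0 < p) (hd : 0 < d) (hpd : p * d < 1) :
    ∫ x in 0..s, g x ^ (-p) * exp (-x) ≤
      2 * (4 ^ (p * d) / (1 - p * d)) * (1 - exp (-s)) * (⨆ x ∈ Icc 0 (min s 1), g x) ^ (-p) := by
  set a := min s 1
  have ha : 0 < a := lt_min hs one_pos
  have has : a ≤ s := min_le_left s 1
  have hMa := iSup_Icc_pos hg hgpos ha.le has
  have hC : 0 ≤ 4 ^ (p * d) / (1 - p * d) := div_nonneg (by positivity) (by linarith)
  have hparts := intervalIntegral_mul_exp_neg_le_of_primitive_le ha has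
    (hg.rpow_const fun x hx => Or.inl (hgpos x hx).ne')
    (fun x hx => (rpow_pos_of_pos (hgpos x hx) _).le)
    (K := 4 ^ (p * d) / (1 - p * d) * (⨆ x ∈ Icc 0 a, g x) ^ (-p)) fun y hy => by
      have hy0 : 0 < y := ha.trans_le hy.1
      have hMy := iSup_Icc_pos hg hgpos hy0.le hy.2
      have hmono : ⨆ x ∈ Icc 0 a, g x ≤ ⨆ x ∈ Icc 0 y, g x :=
        Real.iSup_le (fun x => Real.iSup_le (fun hx => le_biSup_of_continuousOn isCompact_Icc
          (hg.mono (Icc_subset_Icc le_rfl hy.2)) ⟨hx.1, hx.2.trans hy.1⟩) hMy.le) hMy.le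
      calc ∫ x in 0..y, g x ^ (-p)
          ≤ 4 ^ (p * d) / (1 - p * d) * y * (⨆ x ∈ Icc 0 y, g x) ^ (-p) :=
            h.intervalIntegral_rpow_neg_le hg hgpos hp hd hpd hy0 hy.2
        _ ≤ 4 ^ (p * d) / (1 - p * d) * y * (⨆ x ∈ Icc 0 a, g x) ^ (-p) :=
            mul_le_mul_of_nonneg_left (rpow_le_rpow_of_nonpos hMa hmono (by linarith))
              (mul_nonneg hC hy0.le)
        _ = _ := by ring
  refine hparts.trans ?_
  have hE : 0 ≤ 1 - exp (-s) := sub_nonneg.2 (exp_le_one_iff.2 (by linarith))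
  have ha1 : 1 + a ≤ 2 := by linarith [min_le_right s 1]
  calc (1 + a) * (4 ^ (p * d) / (1 - p * d) * (⨆ x ∈ Icc 0 a, g x) ^ (-p)) * (1 - exp (-s))
      ≤ 2 * (4 ^ (p * d) / (1 - p * d) * (⨆ x ∈ Icc 0 a, g x) ^ (-p)) * (1 - exp (-s)) := by
        gcongr
    _ = _ := by ring

end

/-- The one-dimensional inequality in the proof of Theorem 1.5: if `g > 0` is continuous
on `[0,s]` and satisfies a Remez-type inequality with exponent `d` on every closed
subinterval of `[0,s]`, then for `m·n = p·q`, `p·d < 1`,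
`(∫_0^s g^m e^{−x})^n (∫_0^s g^{−p} e^{−x})^q
  ≤ (2e)^{n+q} 4^{(mn+pq)d} Γ(md+1)^n / (1−pd)^q · (1−e^{−s})^{n+q}`. -/
theorem needle_inequality (d s : ℝ) (hd : 0 < d) (hs : 0 < s)
    (g : ℝ → ℝ) (hg : ContinuousOn g (Set.Icc 0 s))
    (hgpos : ∀ x ∈ Set.Icc (0 : ℝ) s, 0 < g x)
    -- the Remez-type condition on every closed subinterval `J = [u,v] ⊆ [0,s]`
    (hrem : ∀ u v : ℝ, 0 ≤ u → u ≤ v → v ≤ s →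
      ∀ ω : Set ℝ, ω ⊆ Set.Icc u v → MeasurableSet ω → 0 < volume ω →
        (⨆ x ∈ Set.Icc u v, g x) ≤
          (4 * (v - u) / (volume ω).toReal) ^ d * ⨆ x ∈ ω, g x)
    (m n p q : ℝ) (hm : 0 < m) (hn : 0 < n) (hp : 0 < p) (hq : 0 < q)
    (hmn : m * n = p * q) (hpd : p * d < 1) :
    (∫ x in (0 : ℝ)..s, g x ^ m * Real.exp (-x)) ^ n *
        (∫ x in (0 : ℝ)..s, g x ^ (-p) * Real.exp (-x)) ^ q ≤
      (2 * Real.exp 1) ^ (n + q) * (4 : ℝ) ^ ((m * n + p * q) * d) *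
        Real.Gamma (m * d + 1) ^ n / (1 - p * d) ^ q * (1 - Real.exp (-s)) ^ (n + q) := by
  have hR : RemezCondition g d s := hrem
  have hE : 0 < 1 - exp (-s) := sub_pos.2 (exp_lt_one_iff.2 (by linarith))
  have hΓ : 0 < Gamma (m * d + 1) := Gamma_pos_of_pos (by positivity)
  have h1pd : 0 < 1 - p * d := by linarith
  have hM := iSup_Icc_pos hg hgpos (le_min hs.le zero_le_one) (min_le_left s 1)
  have h2e : 2 ≤ 2 * exp 1 := by linarith [add_one_le_exp 1]
  refine (rpow_mul_rpow_le_of_le_mul_rpow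
    (α := 2 * exp 1 * 4 ^ (m * d) * Gamma (m * d + 1) * (1 - exp (-s)))
    (β := 2 * exp 1 * (4 ^ (p * d) / (1 - p * d)) * (1 - exp (-s)))
    (intervalIntegral.integral_nonneg hs.le fun x hx => by
      have := rpow_nonneg (hgpos x hx).le m; positivity)
    (intervalIntegral.integral_nonneg hs.le fun x hx => by
      have := rpow_nonneg (hgpos x hx).le (-p); positivity)
    hM hn.le hq.le hmn
    ((hR.intervalIntegral_rpow_mul_exp_neg_le hg hgpos hs.le hm.le hd.le).trans
      (by gcongr; linarith [exp_pos 1]))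
    ((hR.intervalIntegral_rpow_neg_mul_exp_neg_le hg hgpos hs hp hd hpd).trans
      (by gcongr))).trans_eq ?_
  rw [show (m * n + p * q) * d = m * d * n + p * d * q by ring]
  simp (disch := positivity) only [mul_rpow, div_rpow, rpow_add, ← rpow_mul]
  ring
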